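/- arXiv:1310.7991 — 2 statements merged into one kernel-verified Lean document; each statement's English description precedes it below -/
import Mathlib

section
/- Let W be an r × n matrix and χ be an r × n matrix with entries in {0,1} such that every nonzero entry of W occurs where χ equals 1. Then the spectral norm satisfies ‖W‖₂ ≤ ‖W‖_∞ · ‖χ‖₂, where ‖W‖_∞ is the maximum absolute value of an entry of W. -/
/-!
The support condition gives the entrywise domination `|W| ≤ ‖W‖_∞ • χ`, and the `ℓ²` operator
norm is monotone under entrywise domination by a nonnegative matrix: `|(A x)_p| ≤ (B |x|)_p`
and `|x|` has the same Euclidean norm as `x`.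
-/

open Finset

noncomputable def specNorm {r n : ℕ} (W : Matrix (Fin r) (Fin n) ℝ) : ℝ :=
  ‖LinearMap.toContinuousLinearMap (Matrix.toEuclideanLin W)‖

open scoped Matrix.Norms.L2Operator

theorem specNorm_eq_l2_opNorm {r n : ℕ} (W : Matrix (Fin r) (Fin n) ℝ) : specNorm W = ‖W‖ :=
  rfl

theorem EuclideanSpace.norm_le_norm_of_abs_le {ι : Type*} [Fintype ι]
    {x y : EuclideanSpace ℝ ι} (h : ∀ i, |x i| ≤ |y i|) : ‖x‖ ≤ ‖y‖ := by
  simp only [EuclideanSpace.norm_eq, Real.norm_eq_abs, sq_abs]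
  exact Real.sqrt_le_sqrt (sum_le_sum fun i _ ↦ sq_le_sq.mpr (h i))

theorem abs_apply_le_iSup_iSup_abs {m n : Type*} [Finite m] [Finite n] (f : m → n → ℝ)
    (i : m) (j : n) : |f i j| ≤ ⨆ p, ⨆ q, |f p q| :=
  calc |f i j| ≤ ⨆ q, |f i q| := le_ciSup (f := fun q ↦ |f i q|) (Set.finite_range _).bddAbove j
    _ ≤ ⨆ p, ⨆ q, |f p q| := le_ciSup (f := fun p ↦ ⨆ q, |f p q|) (Set.finite_range _).bddAbove i

namespace Matrix

variable {m n : Type*} [Fintype n]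

theorem abs_mulVec_le_mulVec_abs {A B : Matrix m n ℝ} (h : ∀ i j, |A i j| ≤ B i j)
    (x : n → ℝ) (i : m) : |(A *ᵥ x) i| ≤ (B *ᵥ fun j ↦ |x j|) i :=
  calc |(A *ᵥ x) i| ≤ ∑ j, |A i j| * |x j| := by
        simpa only [mulVec, dotProduct, abs_mul] using abs_sum_le_sum_abs (fun j ↦ A i j * x j) univ
    _ ≤ (B *ᵥ fun j ↦ |x j|) i := by
        simp only [mulVec, dotProduct]
        gcongr with j
        exact h i j

theorem l2_opNorm_le_of_abs_le [Fintype m] [DecidableEq n] {A B : Matrix m n ℝ}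
    (h : ∀ i j, |A i j| ≤ B i j) : ‖A‖ ≤ ‖B‖ := by
  rw [l2_opNorm_def]
  refine ContinuousLinearMap.opNorm_le_bound _ (norm_nonneg B) fun x ↦ ?_
  let y : EuclideanSpace ℝ n := WithLp.toLp 2 fun j ↦ |x j|
  have hy : ‖y‖ = ‖x‖ := by simp [y, EuclideanSpace.norm_eq]
  calc _ ≤ ‖(EuclideanSpace.equiv m ℝ).symm (B *ᵥ y)‖ :=
        EuclideanSpace.norm_le_norm_of_abs_le fun i ↦
          (abs_mulVec_le_mulVec_abs h x i).trans (le_abs_self _)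
    _ ≤ ‖B‖ * ‖y‖ := B.l2_opNorm_mulVec y
    _ = ‖B‖ * ‖x‖ := by rw [hy]

end Matrix

/-- If `χ` is a 0/1 matrix and every nonzero entry of `W` occurs where `χ = 1`,
then `‖W‖₂ ≤ ‖W‖_∞ · ‖χ‖₂`. -/
theorem stmt5 (r n : ℕ) (W χ : Matrix (Fin r) (Fin n) ℝ)
    (hχ : ∀ p i, χ p i = 0 ∨ χ p i = 1)
    (hsupp : ∀ p i, W p i ≠ 0 → χ p i = 1) :
    specNorm W ≤ (⨆ p, ⨆ i, |W p i|) * specNorm χ := by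
  set M := ⨆ p, ⨆ i, |W p i|
  have hM : 0 ≤ M := Real.iSup_nonneg fun p ↦ Real.iSup_nonneg fun i ↦ abs_nonneg _
  have hdom : ∀ p i, |W p i| ≤ (M • χ) p i := fun p i ↦ by
    rcases eq_or_ne (W p i) 0 with h | h
    · rcases hχ p i with h' | h' <;> simp [h, h', hM]
    · simpa [hsupp p i h] using abs_apply_le_iSup_iSup_abs W p i
  calc specNorm W = ‖W‖ := specNorm_eq_l2_opNorm W
    _ ≤ ‖M • χ‖ := Matrix.l2_opNorm_le_of_abs_le hdom
    _ = M * specNorm χ := by rw [norm_smul, Real.norm_of_nonneg hM, specNorm_eq_l2_opNorm]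
end

section
/- Let X be an r×n matrix such that X Xᵀ is invertible with ‖(X Xᵀ)⁻¹‖₂ ≤ 8r/(ns), and such that the first diagonal entry satisfies X¹(X¹)ᵀ ≥ ns/(8r) (where X¹ denotes the first row of X), and suppose ‖X_{∖1}(X¹)ᵀ‖₂ ≤ 5s²n/r^{3/2} where X_{∖1} is X with the first row removed. Then the off-diagonal part of the first column of (X Xᵀ)⁻¹ satisfies ‖((X Xᵀ)⁻¹)_{∖1,1}‖₂ ≤ 320√r/n. -/
/-! Let `A = XXᵀ` and `M = A⁻¹`. The equation `M A = 1`, read in column `0`, says that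
`M` maps the first column of `A` to `e₀`; hence on the rows `q ≠ 0` it gives
`A₀₀ · M_{q,0} = -(M w)_q`, where `w` is the first column of `A` with its diagonal entry
replaced by `0`. Therefore `A₀₀ ‖M_{∖0,0}‖ ≤ ‖M‖₂ ‖A_{∖0,0}‖`, and the three assumed
bounds multiply to `(8r/(ns))² · 5s²n/r^{3/2} = 320√r/n`. -/

open Finset Matrix

lemma specNorm_mulVec_le {k l : ℕ} (W : Matrix (Fin k) (Fin l) ℝ) (u : Fin l → ℝ) :
    √(∑ j, (W *ᵥ u) j ^ 2) ≤ specNorm W * √(∑ i, u i ^ 2) := by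
  have h := (LinearMap.toContinuousLinearMap (Matrix.toEuclideanLin W)).le_opNorm
    (WithLp.toLp 2 u)
  simp only [LinearMap.coe_toContinuousLinearMap', Matrix.toLpLin_toLp, Matrix.toLin'_apply,
    EuclideanSpace.norm_eq, Real.norm_eq_abs, sq_abs] at h
  exact h

lemma sqrt_sum_succ_sq_le {m : ℕ} (f : Fin (m + 1) → ℝ) :
    √(∑ q : Fin m, f q.succ ^ 2) ≤ √(∑ j, f j ^ 2) :=
  Real.sqrt_le_sqrt <| by
    rw [Fin.sum_univ_succ]
    exact le_add_of_nonneg_left (sq_nonneg _)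

theorem abs_mul_sqrt_sum_inv_col_le {m : ℕ} (A M : Matrix (Fin (m + 1)) (Fin (m + 1)) ℝ)
    (h : M * A = 1) :
    |A 0 0| * √(∑ q : Fin m, M q.succ 0 ^ 2) ≤ specNorm M * √(∑ q : Fin m, A q.succ 0 ^ 2) := by
  set w : Fin (m + 1) → ℝ := Fin.cons 0 fun p => A p.succ 0
  have hw : ∀ q : Fin m, (M *ᵥ w) q.succ = -(A 0 0 * M q.succ 0) := by
    intro q
    have hq := congr_fun (congr_fun h q.succ) 0
    rw [mul_apply, one_apply_ne (Fin.succ_ne_zero q), Fin.sum_univ_succ] at hq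
    simp only [w, mulVec, dotProduct, Fin.sum_univ_succ, Fin.cons_zero, Fin.cons_succ,
      mul_zero, zero_add]
    linarith
  calc |A 0 0| * √(∑ q : Fin m, M q.succ 0 ^ 2)
      = √(∑ q : Fin m, (M *ᵥ w) q.succ ^ 2) := by
        rw [← Real.sqrt_sq_eq_abs, ← Real.sqrt_mul (sq_nonneg _), mul_sum]
        simp only [hw, neg_sq, mul_pow]
    _ ≤ √(∑ j, (M *ᵥ w) j ^ 2) := sqrt_sum_succ_sq_le _
    _ ≤ specNorm M * √(∑ j, w j ^ 2) := specNorm_mulVec_le M w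
    _ = specNorm M * √(∑ q : Fin m, A q.succ 0 ^ 2) := by
        simp only [w, Fin.sum_univ_succ, Fin.cons_zero, Fin.cons_succ]
        norm_num

lemma eight_div_mul_eight_div_mul_five_div_rpow_eq {r s n : ℝ} (hr : 0 < r) (hs : s ≠ 0)
    (hn : n ≠ 0) :
    8 * r / (n * s) * (8 * r / (n * s) * (5 * s ^ 2 * n / r ^ ((3 : ℝ) / 2))) =
      320 * √r / n := by
  have h32 : r ^ ((3 : ℝ) / 2) = r * √r := by
    rw [Real.sqrt_eq_rpow, ← Real.rpow_one_add' hr.le (by norm_num)]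
    norm_num
  have : √r ≠ 0 := (Real.sqrt_pos.2 hr).ne'
  rw [h32]
  field_simp
  rw [Real.sq_sqrt hr.le]
  ring

/-- Off-diagonal first column of `(XXᵀ)⁻¹`: under the stated bounds,
`‖((XXᵀ)⁻¹)_{∖1,1}‖₂ ≤ 320√r/n`. -/
theorem stmt13 (m N : ℕ) (r s n : ℝ) (hr : 0 < r) (hs : 0 < s) (hn : 0 < n)
    (X : Matrix (Fin (m + 1)) (Fin N) ℝ)
    (hdet : IsUnit (X * Xᵀ).det)
    (hinv : specNorm ((X * Xᵀ)⁻¹) ≤ 8 * r / (n * s))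
    (hdiag : n * s / (8 * r) ≤ ∑ i, X 0 i * X 0 i)
    (hcross : Real.sqrt (∑ q : Fin m, (∑ i, X q.succ i * X 0 i) ^ 2) ≤
      5 * s ^ 2 * n / r ^ ((3 : ℝ) / 2)) :
    Real.sqrt (∑ q : Fin m, ((X * Xᵀ)⁻¹ q.succ 0) ^ 2) ≤ 320 * Real.sqrt r / n := by
  set A := X * Xᵀ
  have hcol : ∀ j, A j 0 = ∑ i, X j i * X 0 i := fun j => by simp [A, mul_apply]
  have ha : 0 < A 0 0 := hcol 0 ▸ lt_of_lt_of_le (by positivity) hdiag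
  have hinva : 1 / A 0 0 ≤ 8 * r / (n * s) := by
    rw [one_div_le ha (by positivity), one_div_div]
    exact hcol 0 ▸ hdiag
  have hkey := abs_mul_sqrt_sum_inv_col_le A A⁻¹ (nonsing_inv_mul A hdet)
  rw [abs_of_pos ha] at hkey
  simp only [hcol] at hkey
  calc √(∑ q : Fin m, A⁻¹ q.succ 0 ^ 2)
      ≤ 1 / A 0 0 * (specNorm A⁻¹ * √(∑ q : Fin m, (∑ i, X q.succ i * X 0 i) ^ 2)) := by
        rw [one_div_mul_eq_div, le_div_iff₀ ha, mul_comm]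
        exact hkey
    _ ≤ 8 * r / (n * s) * (8 * r / (n * s) * (5 * s ^ 2 * n / r ^ ((3 : ℝ) / 2))) := by
        have : 0 ≤ specNorm A⁻¹ := norm_nonneg _
        gcongr
    _ = 320 * √r / n := eight_div_mul_eight_div_mul_five_div_rpow_eq hr hs.ne' hn.ne'
end
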